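/- arXiv:2103.13075 — 2 statements merged into one kernel-verified Lean document; each statement's English description precedes it below -/
import Mathlib

section
/- Let q < 0, Q a star body in ℝⁿ with origin in its interior, and K_i convex bodies with origin in their interiors for i = 1, 2, …. If the sequence of dual mixed volumes Ṽ_q(K_i, Q) is bounded from above, then there exists M > 1 depending only on Q such that the polar bodies satisfy K_i* ⊆ MB for all i. -/
open MeasureTheory Metric Set Filter Pointwise
open scoped Classical

noncomputable section

abbrev Euc (n : ℕ) := EuclideanSpace ℝ (Fin n)

/-- Support function of a set. -/
def supportFn {n : ℕ} (K : Set (Euc n)) (u : Euc n) : ℝ :=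
  sSup ((fun x => (inner ℝ u x : ℝ)) '' K)

/-- Radial function of a set (w.r.t. the origin). -/
def radialFn {n : ℕ} (K : Set (Euc n)) (u : Euc n) : ℝ :=
  sSup {r : ℝ | 0 ≤ r ∧ r • u ∈ K}

/-- A convex body containing the origin in its interior. -/
def IsConvexBody {n : ℕ} (K : Set (Euc n)) : Prop :=
  IsCompact K ∧ Convex ℝ K ∧ 0 ∈ interior K

/-- A star body (about the origin) with origin in its interior. -/
def IsStarBody {n : ℕ} (Q : Set (Euc n)) : Prop :=
  IsCompact Q ∧ 0 ∈ interior Q ∧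
    (∀ x ∈ Q, ∀ t : ℝ, 0 ≤ t → t ≤ 1 → t • x ∈ Q) ∧
    ContinuousOn (radialFn Q) (sphere (0 : Euc n) 1)

/-- `K` and `L` are dilates of each other. -/
def Dilates {n : ℕ} (K L : Set (Euc n)) : Prop :=
  ∃ c : ℝ, 0 < c ∧ K = c • L

/-- The `L_p` Minkowski combination `s·K +_p t·L` (Wulff shape). -/
def lpComb {n : ℕ} (p s t : ℝ) (K L : Set (Euc n)) : Set (Euc n) :=
  if p = 0 then
    {x | ∀ u ∈ sphere (0 : Euc n) 1,
      (inner ℝ x u : ℝ) ≤ supportFn K u ^ s * supportFn L u ^ t}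
  else
    {x | ∀ u ∈ sphere (0 : Euc n) 1,
      (inner ℝ x u : ℝ) ≤ (s * supportFn K u ^ p + t * supportFn L u ^ p) ^ (1/p)}

/-- Radial function of the radial `p`-combination `s·K +~_p t·L`. -/
def radialCombFn {n : ℕ} (p s t : ℝ) (K L : Set (Euc n)) (u : Euc n) : ℝ :=
  if p = 0 then radialFn K u ^ s * radialFn L u ^ t
  else (s * radialFn K u ^ p + t * radialFn L u ^ p) ^ (1/p)

/-- The radial `p`-combination `s·K +~_p t·L` as a star-shaped set. -/
def radialComb {n : ℕ} (p s t : ℝ) (K L : Set (Euc n)) : Set (Euc n) :=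
  {x | ∃ u ∈ sphere (0 : Euc n) 1, ∃ r : ℝ,
    0 ≤ r ∧ r ≤ radialCombFn p s t K L u ∧ x = r • u}

/-- The spherical Lebesgue measure on `S^{n-1}`. -/
def sphμ (n : ℕ) : Measure (Euc n) := (μH[(n : ℝ) - 1]).restrict (sphere 0 1)

/-- The `q`-th dual mixed volume `~V_q(K,Q)`. -/
def dualMixedVol {n : ℕ} (q : ℝ) (K Q : Set (Euc n)) : ℝ :=
  (1 / (n : ℝ)) * ∫ u, radialFn K u ^ q * radialFn Q u ^ ((n : ℝ) - q) ∂(sphμ n)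

/-- The radial Gauss map of `K`. -/
def radialGaussMap {n : ℕ} (K : Set (Euc n)) (u : Euc n) : Euc n :=
  if h : ∃ v, v ∈ sphere (0 : Euc n) 1 ∧
      (inner ℝ (radialFn K u • u) v : ℝ) = supportFn K v then h.choose else 0

/-- The `L_p` dual mixed volume `~V_{p,q}(K,L,Q)`. -/
def lpDualMixedVol {n : ℕ} (p q : ℝ) (K L Q : Set (Euc n)) : ℝ :=
  (1 / (n : ℝ)) * ∫ u,
    (supportFn L (radialGaussMap K u) / supportFn K (radialGaussMap K u)) ^ p *
      radialFn K u ^ q * radialFn Q u ^ ((n : ℝ) - q) ∂(sphμ n)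

/-- The `L_p` dual curvature measure `~C_{p,q}(K,Q,·)` of `K` w.r.t. `Q`. -/
def lpDualCurv {n : ℕ} (p q : ℝ) (K Q : Set (Euc n)) : Measure (Euc n) :=
  ((sphμ n).withDensity fun u => ENNReal.ofReal
      ((1 / (n : ℝ)) * supportFn K (radialGaussMap K u) ^ (-p) *
        radialFn K u ^ q * radialFn Q u ^ ((n : ℝ) - q))).map (radialGaussMap K)

/-- The dual mixed entropy `~E(K,Q)`. -/
def dualEntropy {n : ℕ} (K Q : Set (Euc n)) : ℝ :=
  (1 / (n : ℝ)) * ∫ u, Real.log (radialFn K u / radialFn Q u) * radialFn Q u ^ (n : ℝ) ∂(sphμ n)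

/-- The polar body. -/
def polarBody {n : ℕ} (K : Set (Euc n)) : Set (Euc n) :=
  {x | ∀ y ∈ K, (inner ℝ x y : ℝ) ≤ 1}

/-- Volume (Lebesgue measure) as a real number. -/
def vol {n : ℕ} (K : Set (Euc n)) : ℝ := (volume K).toReal

/-!
Let `x ∈ K*`, `x ≠ 0`, and `v = x / ‖x‖`. On the spherical cap `{u : u·v ≥ 1/2}` we have
`x·u ≥ ‖x‖/2`, so `ρ_K(u) ≤ 2/‖x‖`, and because `q < 0` the integrand `ρ_K^q ρ_Q^{n-q}` is at
least `(‖x‖/2)^{-q} ε^{n-q}` there, where `ε > 0` bounds `ρ_Q` from below. Reflections show that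
all caps of a given height have the same spherical measure, which is positive. Hence
`Ṽ_q(K,Q) ≥ c ‖x‖^{-q}` with `c` depending only on `Q`, `q` and `n`, and a bound on the dual mixed
volumes bounds `‖x‖`.

The measure of a cap of height `t` is controlled through the graph `northLift` of the upper
hemisphere over the unit ball of `ℝ^{n-1}`: dropping the first coordinate is `1`-Lipschitz, and
on the cap its inverse `northLift` is `(1 + 1/t)`-Lipschitz. This gives positivity of caps and,
covering the sphere by `2n` caps of height `1/n`, finiteness of the spherical measure.
-/

open scoped NNReal ENNReal

section RadialFunction

variable {n : ℕ} {K : Set (Euc n)} {u : Euc n}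

lemma radialFn_nonneg (K : Set (Euc n)) (u : Euc n) : 0 ≤ radialFn K u :=
  Real.sSup_nonneg fun _ hr => hr.1

lemma bddAbove_radialSet (hK : Bornology.IsBounded K) (hu : u ≠ 0) :
    BddAbove {r : ℝ | 0 ≤ r ∧ r • u ∈ K} := by
  obtain ⟨R, hR⟩ := hK.subset_closedBall 0
  refine ⟨R / ‖u‖, fun r ⟨hr, hru⟩ => ?_⟩
  have := mem_closedBall_zero_iff.1 (hR hru)
  rwa [norm_smul, Real.norm_of_nonneg hr, ← le_div_iff₀ (norm_pos_iff.2 hu)] at this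

-- The defining set is unbounded or empty, and `sSup` is `0` for both.
lemma radialFn_zero (K : Set (Euc n)) : radialFn K 0 = 0 := by
  by_cases h0 : (0 : Euc n) ∈ K
  · refine Real.sSup_of_not_bddAbove fun ⟨R, hR⟩ => ?_
    have := hR (show max R 0 + 1 ∈ {r : ℝ | 0 ≤ r ∧ r • (0 : Euc n) ∈ K} by
      simpa using ⟨by positivity, h0⟩)
    linarith [le_max_left R 0]
  · simp [radialFn, h0]

lemma le_radialFn (hK : Bornology.IsBounded K) (hu : u ≠ 0) {r : ℝ} (hr : 0 ≤ r)
    (hru : r • u ∈ K) : r ≤ radialFn K u :=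
  le_csSup (bddAbove_radialSet hK hu) ⟨hr, hru⟩

lemma radialFn_le_of_subset_closedBall {R : ℝ} (hR : 0 ≤ R) (hKR : K ⊆ closedBall 0 R)
    (hu : ‖u‖ = 1) : radialFn K u ≤ R := by
  refine Real.sSup_le (fun r ⟨hr, hru⟩ => ?_) hR
  simpa [norm_smul, hu, abs_of_nonneg hr] using hKR hru

lemma exists_forall_radialFn_le (hK : Bornology.IsBounded K) :
    ∃ R, ∀ u ∈ sphere (0 : Euc n) 1, radialFn K u ≤ R := by
  obtain ⟨R, hR, hKR⟩ := hK.subset_closedBall_lt 0 0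
  exact ⟨R, fun u hu => radialFn_le_of_subset_closedBall hR.le hKR (mem_sphere_zero_iff_norm.1 hu)⟩

lemma exists_pos_forall_le_radialFn (hK : Bornology.IsBounded K) (h0 : 0 ∈ interior K) :
    ∃ ε > 0, ∀ u ∈ sphere (0 : Euc n) 1, ε ≤ radialFn K u := by
  obtain ⟨δ, hδ, hball⟩ := Metric.mem_nhds_iff.1 (mem_interior_iff_mem_nhds.1 h0)
  refine ⟨δ / 2, by positivity, fun u hu => ?_⟩
  rw [mem_sphere_zero_iff_norm] at hu
  refine le_radialFn hK (norm_ne_zero_iff.1 (by simp [hu])) (by positivity) (hball ?_)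
  rw [mem_ball_zero_iff, norm_smul, hu, mul_one, Real.norm_of_nonneg (by positivity)]
  linarith

lemma radialFn_le_inv_of_mem_polarBody {x : Euc n} (hx : x ∈ polarBody K) {c : ℝ} (hc : 0 < c)
    (hxu : c ≤ inner ℝ x u) : radialFn K u ≤ c⁻¹ := by
  refine Real.sSup_le (fun r ⟨hr, hru⟩ => ?_) (by positivity)
  have h := hx _ hru
  rw [real_inner_smul_right] at h
  rw [← one_div, le_div_iff₀ hc]
  nlinarith

lemma le_radialFn_iff_smul_mem (hcl : IsClosed K) (hK : Bornology.IsBounded K)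
    (hstar : StarConvex ℝ 0 K) (h0 : 0 ∈ K) (hu : u ≠ 0) {a : ℝ} (ha : 0 ≤ a) :
    a ≤ radialFn K u ↔ a • u ∈ K := by
  refine ⟨fun hau => ?_, le_radialFn hK hu ha⟩
  have hmem : radialFn K u • u ∈ K := by
    have hclosed : IsClosed {r : ℝ | 0 ≤ r ∧ r • u ∈ K} :=
      isClosed_Ici.inter (hcl.preimage (continuous_id.smul continuous_const))
    exact (hclosed.csSup_mem ⟨0, le_rfl, by simpa using h0⟩ (bddAbove_radialSet hK hu)).2
  rcases (radialFn_nonneg K u).eq_or_lt with hρ | hρ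
  · rw [← hρ] at hau
    rwa [le_antisymm hau ha, zero_smul]
  · have := hstar.smul_mem hmem (div_nonneg ha hρ.le) ((div_le_one hρ).2 hau)
    rwa [smul_smul, div_mul_cancel₀ _ hρ.ne'] at this

lemma measurable_radialFn (hcl : IsClosed K) (hK : Bornology.IsBounded K)
    (hstar : StarConvex ℝ 0 K) (h0 : 0 ∈ K) : Measurable (radialFn K) := by
  refine measurable_of_Ici fun a => ?_
  rcases le_or_gt a 0 with ha | ha
  · convert MeasurableSet.univ
    exact eq_univ_of_forall fun u => ha.trans (radialFn_nonneg K u)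
  · have : radialFn K ⁻¹' Ici a = (fun u => a • u) ⁻¹' K \ {0} := by
      ext u
      rcases eq_or_ne u 0 with rfl | hu
      · simp [radialFn_zero, ha]
      · simp [hu, le_radialFn_iff_smul_mem hcl hK hstar h0 hu ha.le]
    rw [this]
    exact (hcl.preimage (continuous_const_smul a)).measurableSet.diff (measurableSet_singleton 0)

end RadialFunction

section SphericalCap

variable {n : ℕ}

def capSet (v : Euc n) (t : ℝ) : Set (Euc n) := sphere 0 1 ∩ {u | t ≤ inner ℝ u v}

lemma capSet_subset_sphere (v : Euc n) (t : ℝ) : capSet v t ⊆ sphere 0 1 := inter_subset_left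

lemma measurableSet_capSet (v : Euc n) (t : ℝ) : MeasurableSet (capSet v t) :=
  (isClosed_sphere.inter (isClosed_le continuous_const
    (continuous_id.inner continuous_const))).measurableSet

lemma hausdorffMeasure_capSet_le {v w : Euc n} (h : ‖v‖ = ‖w‖) (d t : ℝ) :
    μH[d] (capSet v t) ≤ μH[d] (capSet w t) := by
  set f := (ℝ ∙ (v - w))ᗮ.reflection
  have hfv : f v = w := Submodule.reflection_sub h
  have himage : f '' capSet v t ⊆ capSet w t := by
    rintro _ ⟨u, ⟨hu, htu⟩, rfl⟩
    refine ⟨by simpa using hu, ?_⟩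
    change t ≤ inner ℝ (f u) w
    rwa [← hfv, LinearIsometryEquiv.inner_map_map]
  rw [← f.isometry.hausdorffMeasure_image (Or.inr f.surjective)]
  exact measure_mono himage

lemma hausdorffMeasure_capSet_eq {v w : Euc n} (h : ‖v‖ = ‖w‖) (d t : ℝ) :
    μH[d] (capSet v t) = μH[d] (capSet w t) :=
  (hausdorffMeasure_capSet_le h d t).antisymm (hausdorffMeasure_capSet_le h.symm d t)

lemma sphμ_capSet (v : Euc n) (t : ℝ) :
    sphμ n (capSet v t) = μH[(n : ℝ) - 1] (capSet v t) := by
  rw [sphμ, Measure.restrict_apply (measurableSet_capSet v t),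
    inter_eq_left.2 (capSet_subset_sphere v t)]

lemma measureReal_sphμ_capSet_eq {v w : Euc n} (h : ‖v‖ = ‖w‖) (t : ℝ) :
    (sphμ n).real (capSet v t) = (sphμ n).real (capSet w t) := by
  rw [measureReal_def, measureReal_def, sphμ_capSet, sphμ_capSet, hausdorffMeasure_capSet_eq h]

end SphericalCap

section Hemisphere

variable {m : ℕ}

def euclideanTail (u : Euc (m + 1)) : Euc m := WithLp.toLp 2 (Fin.tail u)

def northLift (y : Euc m) : Euc (m + 1) := WithLp.toLp 2 (Fin.cons (√(1 - ‖y‖ ^ 2)) y)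

lemma norm_sq_eq_sq_add_norm_euclideanTail_sq (u : Euc (m + 1)) :
    ‖u‖ ^ 2 = u 0 ^ 2 + ‖euclideanTail u‖ ^ 2 := by
  simp [EuclideanSpace.norm_sq_eq, Fin.sum_univ_succ, euclideanTail, Fin.tail]

lemma euclideanTail_sub (u w : Euc (m + 1)) :
    euclideanTail (u - w) = euclideanTail u - euclideanTail w := rfl

lemma norm_euclideanTail_le (u : Euc (m + 1)) : ‖euclideanTail u‖ ≤ ‖u‖ := by
  nlinarith [norm_sq_eq_sq_add_norm_euclideanTail_sq u, norm_nonneg u,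
    norm_nonneg (euclideanTail u), sq_nonneg (u 0)]

lemma norm_le_abs_add_norm_euclideanTail (u : Euc (m + 1)) : ‖u‖ ≤ |u 0| + ‖euclideanTail u‖ := by
  nlinarith [norm_sq_eq_sq_add_norm_euclideanTail_sq u, norm_nonneg u,
    norm_nonneg (euclideanTail u), sq_abs (u 0), abs_nonneg (u 0)]

lemma euclideanTail_northLift (y : Euc m) : euclideanTail (northLift y) = y := rfl

lemma northLift_euclideanTail {u : Euc (m + 1)} (hu : ‖u‖ = 1) (h0 : 0 ≤ u 0) :
    northLift (euclideanTail u) = u := by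
  have := norm_sq_eq_sq_add_norm_euclideanTail_sq u
  have h : √(1 - ‖euclideanTail u‖ ^ 2) = u 0 := by
    rw [show 1 - ‖euclideanTail u‖ ^ 2 = u 0 ^ 2 by rw [hu] at this; linarith]
    exact Real.sqrt_sq h0
  ext i
  refine Fin.cases ?_ (fun j => ?_) i
  · simp [northLift, h]
  · simp [northLift, euclideanTail, Fin.tail]

lemma norm_northLift {y : Euc m} (hy : ‖y‖ ≤ 1) : ‖northLift y‖ = 1 := by
  have := norm_sq_eq_sq_add_norm_euclideanTail_sq (northLift y)
  have hy2 : ‖y‖ ^ 2 ≤ 1 := pow_le_one₀ (norm_nonneg y) hy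
  rw [euclideanTail_northLift, show northLift y 0 = √(1 - ‖y‖ ^ 2) from rfl,
    Real.sq_sqrt (by linarith), sub_add_cancel] at this
  exact (pow_eq_one_iff_of_nonneg (norm_nonneg _) two_ne_zero).1 this

lemma mem_capSet_single_zero_one {u : Euc (m + 1)} {t : ℝ} :
    u ∈ capSet (EuclideanSpace.single 0 1) t ↔ ‖u‖ = 1 ∧ t ≤ u 0 := by
  simp [capSet, EuclideanSpace.inner_single_right]

lemma lipschitzWith_euclideanTail : LipschitzWith 1 (euclideanTail (m := m)) :=
  LipschitzWith.of_dist_le_mul fun u w => by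
    simpa [dist_eq_norm, ← euclideanTail_sub] using norm_euclideanTail_le (u - w)

lemma abs_sub_le_of_mem_capSet {t : ℝ} (ht : 0 < t) {u w : Euc (m + 1)}
    (hu : u ∈ capSet (EuclideanSpace.single 0 1) t)
    (hw : w ∈ capSet (EuclideanSpace.single 0 1) t) :
    |u 0 - w 0| ≤ t⁻¹ * ‖euclideanTail u - euclideanTail w‖ := by
  obtain ⟨hu1, htu⟩ := mem_capSet_single_zero_one.1 hu
  obtain ⟨hw1, htw⟩ := mem_capSet_single_zero_one.1 hw
  have hA : 1 = u 0 ^ 2 + ‖euclideanTail u‖ ^ 2 := by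
    simpa [hu1] using norm_sq_eq_sq_add_norm_euclideanTail_sq u
  have hB : 1 = w 0 ^ 2 + ‖euclideanTail w‖ ^ 2 := by
    simpa [hw1] using norm_sq_eq_sq_add_norm_euclideanTail_sq w
  have hAle : ‖euclideanTail u‖ ≤ 1 := hu1 ▸ norm_euclideanTail_le u
  have hBle : ‖euclideanTail w‖ ≤ 1 := hw1 ▸ norm_euclideanTail_le w
  have hD := abs_norm_sub_norm_le (euclideanTail u) (euclideanTail w)
  set A := ‖euclideanTail u‖
  set B := ‖euclideanTail w‖
  have key : |u 0 - w 0| * (u 0 + w 0) ≤ ‖euclideanTail u - euclideanTail w‖ * 2 :=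
    calc |u 0 - w 0| * (u 0 + w 0) = |(B - A) * (B + A)| := by
          rw [← abs_of_pos (by linarith : 0 < u 0 + w 0), ← abs_mul]
          congr 1
          linear_combination hB - hA
      _ = |A - B| * (B + A) := by
          rw [abs_mul, abs_sub_comm, abs_of_nonneg (by positivity : 0 ≤ B + A)]
      _ ≤ ‖euclideanTail u - euclideanTail w‖ * 2 :=
          mul_le_mul hD (by linarith) (by positivity) (norm_nonneg _)
  rw [← div_eq_inv_mul, le_div_iff₀ ht]
  nlinarith [abs_nonneg (u 0 - w 0)]

lemma lipschitzOnWith_northLift {t : ℝ} (ht : 0 < t) :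
    LipschitzOnWith (1 + t⁻¹).toNNReal (northLift (m := m))
      (euclideanTail '' capSet (EuclideanSpace.single 0 1) t) := by
  refine LipschitzOnWith.of_dist_le' ?_
  rintro _ ⟨u, hu, rfl⟩ _ ⟨w, hw, rfl⟩
  have hu' := mem_capSet_single_zero_one.1 hu
  have hw' := mem_capSet_single_zero_one.1 hw
  rw [northLift_euclideanTail hu'.1 (by linarith [hu'.2]),
    northLift_euclideanTail hw'.1 (by linarith [hw'.2]), dist_eq_norm, dist_eq_norm]
  calc ‖u - w‖ ≤ |u 0 - w 0| + ‖euclideanTail u - euclideanTail w‖ := by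
        simpa [euclideanTail_sub] using norm_le_abs_add_norm_euclideanTail (u - w)
    _ ≤ (1 + t⁻¹) * ‖euclideanTail u - euclideanTail w‖ := by
        linarith [abs_sub_le_of_mem_capSet ht hu hw]

lemma hausdorffMeasure_capSet_lt_top {v : Euc (m + 1)} (hv : ‖v‖ = 1) {t : ℝ} (ht : 0 < t) :
    μH[m] (capSet v t) < ∞ := by
  set e₀ : Euc (m + 1) := EuclideanSpace.single 0 1
  rw [← hausdorffMeasure_capSet_eq (show ‖e₀‖ = ‖v‖ by simp [e₀, hv])]
  have hlift : capSet e₀ t ⊆ northLift '' (euclideanTail '' capSet e₀ t) := by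
    intro u hu
    have hu' := mem_capSet_single_zero_one.1 hu
    exact ⟨_, ⟨u, hu, rfl⟩, northLift_euclideanTail hu'.1 (by linarith [hu'.2])⟩
  have hball : euclideanTail '' capSet e₀ t ⊆ closedBall 0 1 := by
    rintro _ ⟨u, hu, rfl⟩
    simpa [← (mem_capSet_single_zero_one.1 hu).1] using norm_euclideanTail_le u
  calc μH[m] (capSet e₀ t) ≤ μH[m] (northLift '' (euclideanTail '' capSet e₀ t)) :=
        measure_mono hlift
    _ ≤ (1 + t⁻¹).toNNReal ^ (m : ℝ) * μH[m] (euclideanTail '' capSet e₀ t) :=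
        (lipschitzOnWith_northLift ht).hausdorffMeasure_image_le (Nat.cast_nonneg m)
    _ ≤ (1 + t⁻¹).toNNReal ^ (m : ℝ) * μH[m] (closedBall (0 : Euc m) 1) := by gcongr
    _ < ∞ := ENNReal.mul_lt_top (by simp) (isCompact_closedBall _ _).measure_lt_top

lemma hausdorffMeasure_capSet_pos {v : Euc (m + 1)} (hv : ‖v‖ = 1) {t : ℝ} (ht : t < 1) :
    0 < μH[m] (capSet v t) := by
  set e₀ : Euc (m + 1) := EuclideanSpace.single 0 1
  rw [← hausdorffMeasure_capSet_eq (show ‖e₀‖ = ‖v‖ by simp [e₀, hv])]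
  set s := max t 0
  have hs : s < 1 := max_lt ht one_pos
  have hball : closedBall (0 : Euc m) √(1 - s ^ 2) ⊆ euclideanTail '' capSet e₀ t := by
    intro y hy
    have hy2 : ‖y‖ ^ 2 ≤ 1 - s ^ 2 := by
      simpa using (Real.le_sqrt (norm_nonneg y) (by nlinarith [le_max_right t 0])).1
        (mem_closedBall_zero_iff.1 hy)
    refine ⟨northLift y, mem_capSet_single_zero_one.2 ⟨norm_northLift ?_, ?_⟩,
      euclideanTail_northLift y⟩
    · nlinarith [norm_nonneg y]
    · calc t ≤ s := le_max_left t 0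
        _ = √(s ^ 2) := (Real.sqrt_sq (le_max_right t 0)).symm
        _ ≤ √(1 - ‖y‖ ^ 2) := Real.sqrt_le_sqrt (by linarith)
  calc 0 < μH[m] (closedBall (0 : Euc m) √(1 - s ^ 2)) :=
        measure_closedBall_pos _ _ (Real.sqrt_pos.2 (by nlinarith [le_max_right t 0]))
    _ ≤ μH[m] (euclideanTail '' capSet e₀ t) := measure_mono hball
    _ ≤ (1 : ℝ≥0) ^ (m : ℝ) * μH[m] (capSet e₀ t) :=
        lipschitzWith_euclideanTail.hausdorffMeasure_image_le (Nat.cast_nonneg m) _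
    _ = μH[m] (capSet e₀ t) := by simp

lemma sphere_subset_iUnion_capSet (m : ℕ) :
    sphere (0 : Euc (m + 1)) 1 ⊆ ⋃ i, (capSet (EuclideanSpace.single i 1) (m + 1 : ℝ)⁻¹ ∪
      capSet (-EuclideanSpace.single i 1) (m + 1 : ℝ)⁻¹) := by
  intro u hu
  have hsum : ∑ i, u i ^ 2 = 1 := by
    simpa [mem_sphere_zero_iff_norm.1 hu] using (EuclideanSpace.norm_sq_eq u).symm
  obtain ⟨i, -, hi⟩ : ∃ i ∈ Finset.univ, (m + 1 : ℝ)⁻¹ ≤ u i ^ 2 :=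
    Finset.exists_le_of_sum_le Finset.univ_nonempty (by
      simp [hsum, mul_inv_cancel₀ (by positivity : (m + 1 : ℝ) ≠ 0)])
  have hui : |u i| ≤ 1 := by
    simpa [mem_sphere_zero_iff_norm.1 hu] using PiLp.norm_apply_le u i
  have hti : (m + 1 : ℝ)⁻¹ ≤ |u i| := hi.trans (by nlinarith [abs_nonneg (u i), sq_abs (u i)])
  refine mem_iUnion.2 ⟨i, ?_⟩
  rcases le_total 0 (u i) with h | h
  · refine Or.inl ⟨hu, ?_⟩
    simpa [EuclideanSpace.inner_single_right, abs_of_nonneg h] using hti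
  · refine Or.inr ⟨hu, ?_⟩
    simpa [EuclideanSpace.inner_single_right, abs_of_nonpos h] using hti

lemma hausdorffMeasure_sphere_lt_top (m : ℕ) : μH[m] (sphere (0 : Euc (m + 1)) 1) < ∞ := by
  have hcap (v : Euc (m + 1)) (hv : ‖v‖ = 1) : μH[m] (capSet v (m + 1 : ℝ)⁻¹) < ∞ :=
    hausdorffMeasure_capSet_lt_top hv (by positivity)
  refine (measure_mono (sphere_subset_iUnion_capSet m)).trans_lt <|
    (measure_iUnion_fintype_le _ _).trans_lt <| ENNReal.sum_lt_top.2 fun i _ => ?_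
  exact (measure_union_le _ _).trans_lt <| ENNReal.add_lt_top.2 ⟨hcap _ (by simp), hcap _ (by simp)⟩

lemma sphμ_succ : sphμ (m + 1) = μH[m].restrict (sphere 0 1) := by
  simp [sphμ]

instance isFiniteMeasure_sphμ (n : ℕ) : IsFiniteMeasure (sphμ n) := by
  cases n with
  | zero =>
    have : sphere (0 : Euc 0) 1 = ∅ :=
      eq_empty_of_forall_notMem fun u hu => by simp [Subsingleton.elim u 0] at hu
    rw [sphμ, this, Measure.restrict_empty]
    infer_instance
  | succ m =>
    rw [sphμ_succ (m := m)]
    exact isFiniteMeasure_restrict.2 (hausdorffMeasure_sphere_lt_top m).ne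

lemma measureReal_sphμ_capSet_pos {v : Euc (m + 1)} (hv : ‖v‖ = 1) {t : ℝ} (ht : t < 1) :
    0 < (sphμ (m + 1)).real (capSet v t) := by
  rw [measureReal_def, sphμ_capSet, Nat.cast_succ, add_sub_cancel_right]
  exact ENNReal.toReal_pos (hausdorffMeasure_capSet_pos hv ht).ne'
    (by simpa [sphμ_capSet] using measure_ne_top (sphμ (m + 1)) (capSet v t))

end Hemisphere

section DualMixedVolume

variable {n : ℕ} {K Q : Set (Euc n)} {q : ℝ}

lemma IsStarBody.measurable_radialFn (hQ : IsStarBody Q) : Measurable (radialFn Q) :=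
  _root_.measurable_radialFn hQ.1.isClosed hQ.1.isBounded (starConvex_zero_iff.2 hQ.2.2.1)
    (interior_subset hQ.2.1)

lemma IsConvexBody.measurable_radialFn (hK : IsConvexBody K) : Measurable (radialFn K) :=
  _root_.measurable_radialFn hK.1.isClosed hK.1.isBounded
    (hK.2.1.starConvex (interior_subset hK.2.2)) (interior_subset hK.2.2)

lemma integrable_dualMixedVol_integrand (hK : IsConvexBody K) (hQ : IsStarBody Q) (hq : q ≤ 0) :
    Integrable (fun u => radialFn K u ^ q * radialFn Q u ^ ((n : ℝ) - q)) (sphμ n) := by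
  obtain ⟨ε, hε, hεK⟩ := exists_pos_forall_le_radialFn hK.1.isBounded hK.2.2
  obtain ⟨R, hR⟩ := exists_forall_radialFn_le hQ.1.isBounded
  refine Integrable.of_bound ((hK.measurable_radialFn.pow_const q).mul
    (hQ.measurable_radialFn.pow_const _)).aestronglyMeasurable (ε ^ q * R ^ ((n : ℝ) - q)) ?_
  refine ae_restrict_of_forall_mem isClosed_sphere.measurableSet fun u hu => ?_
  have hρQ := radialFn_nonneg Q u
  rw [Real.norm_of_nonneg (mul_nonneg (Real.rpow_nonneg (radialFn_nonneg K u) _)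
    (Real.rpow_nonneg hρQ _))]
  exact mul_le_mul (Real.rpow_le_rpow_of_nonpos hε (hεK u hu) hq)
    (Real.rpow_le_rpow hρQ (hR u hu) (by linarith [(Nat.cast_nonneg n : (0 : ℝ) ≤ n)]))
    (Real.rpow_nonneg hρQ _) (Real.rpow_nonneg hε.le _)

lemma rpow_neg_le_radialFn_rpow_of_mem_polarBody {x u : Euc n} (hx : x ∈ polarBody K)
    (hρ : 0 < radialFn K u) {c : ℝ} (hc : 0 < c) (hxu : c ≤ inner ℝ x u) (hq : q ≤ 0) :
    c ^ (-q) ≤ radialFn K u ^ q :=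
  calc c ^ (-q) = c⁻¹ ^ q := by rw [Real.inv_rpow hc.le, Real.rpow_neg hc.le]
    _ ≤ radialFn K u ^ q :=
      Real.rpow_le_rpow_of_nonpos hρ (radialFn_le_inv_of_mem_polarBody hx hc hxu) hq

end DualMixedVolume

theorem exists_pos_mul_rpow_norm_le_dualMixedVol {m : ℕ} {Q : Set (Euc (m + 1))}
    (hQ : IsStarBody Q) {q : ℝ} (hq : q ≤ 0) :
    ∃ c > 0, ∀ K, IsConvexBody K → ∀ x ∈ polarBody K, x ≠ 0 →
      c * ‖x‖ ^ (-q) ≤ dualMixedVol q K Q := by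
  obtain ⟨ε, hε, hεQ⟩ := exists_pos_forall_le_radialFn hQ.1.isBounded hQ.2.1
  set N : ℝ := ((m + 1 : ℕ) : ℝ)
  have hs := measureReal_sphμ_capSet_pos
    (by simp : ‖EuclideanSpace.single (0 : Fin (m + 1)) (1 : ℝ)‖ = 1) (by norm_num : (1 / 2 : ℝ) < 1)
  set s := (sphμ (m + 1)).real (capSet (EuclideanSpace.single 0 1) (1 / 2))
  refine ⟨1 / N * (2 ^ q * ε ^ (N - q) * s), by positivity, fun K hK x hx hx0 => ?_⟩
  obtain ⟨εK, hεK, hεKK⟩ := exists_pos_forall_le_radialFn hK.1.isBounded hK.2.2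
  set v := ‖x‖⁻¹ • x
  have hv : ‖v‖ = 1 := norm_smul_inv_norm hx0
  have hsv : (sphμ (m + 1)).real (capSet v (1 / 2)) = s :=
    measureReal_sphμ_capSet_eq (by simp [hv]) _
  have hcap : ∀ u ∈ capSet v (1 / 2), (‖x‖ / 2) ^ (-q) * ε ^ (N - q) ≤
      radialFn K u ^ q * radialFn Q u ^ (N - q) := by
    rintro u ⟨hu, huv : (1 / 2 : ℝ) ≤ inner ℝ u v⟩
    have hxu : ‖x‖ / 2 ≤ inner ℝ x u := by
      have : inner ℝ u v = ‖x‖⁻¹ * inner ℝ x u := by rw [real_inner_smul_right, real_inner_comm]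
      rw [this, ← div_eq_inv_mul, le_div_iff₀ (norm_pos_iff.2 hx0)] at huv
      linarith
    exact mul_le_mul
      (rpow_neg_le_radialFn_rpow_of_mem_polarBody hx (hεK.trans_le (hεKK u hu))
        (by positivity) hxu hq)
      (Real.rpow_le_rpow hε.le (hεQ u hu) (sub_nonneg.2 (hq.trans (Nat.cast_nonneg _))))
      (Real.rpow_nonneg hε.le _) (Real.rpow_nonneg (radialFn_nonneg K u) _)
  have hint := integrable_dualMixedVol_integrand hK hQ hq
  calc 1 / N * (2 ^ q * ε ^ (N - q) * s) * ‖x‖ ^ (-q)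
      = 1 / N * ((‖x‖ / 2) ^ (-q) * ε ^ (N - q) * (sphμ (m + 1)).real (capSet v (1 / 2))) := by
        rw [hsv, Real.div_rpow (norm_nonneg x) zero_le_two, Real.rpow_neg zero_le_two]
        field_simp
    _ ≤ 1 / N * ∫ u in capSet v (1 / 2),
          radialFn K u ^ q * radialFn Q u ^ (N - q) ∂sphμ (m + 1) := by
        gcongr
        exact setIntegral_ge_of_const_le_real (measurableSet_capSet v _) (measure_ne_top _ _)
          hcap hint.integrableOn
    _ ≤ 1 / N * ∫ u, radialFn K u ^ q * radialFn Q u ^ (N - q) ∂sphμ (m + 1) :=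
        mul_le_mul_of_nonneg_left (setIntegral_le_integral hint (ae_of_all _ fun u =>
          mul_nonneg (Real.rpow_nonneg (radialFn_nonneg K u) _)
            (Real.rpow_nonneg (radialFn_nonneg Q u) _))) (by positivity)
    _ = dualMixedVol q K Q := rfl

/-- bounded dual mixed volumes imply uniformly bounded polar bodies (q < 0). -/
theorem polarBody_bounded_of_dualMixedVol_bounded {n : ℕ} (Q : Set (Euc n)) (q : ℝ)
    (hQ : IsStarBody Q) (hq : q < 0)
    (K : ℕ → Set (Euc n)) (hK : ∀ i, IsConvexBody (K i))
    (hb : ∃ C : ℝ, ∀ i, dualMixedVol q (K i) Q ≤ C) :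
    ∃ M : ℝ, 1 < M ∧ ∀ i, polarBody (K i) ⊆ closedBall (0 : Euc n) M := by
  obtain ⟨C, hC⟩ := hb
  cases n with
  | zero => exact ⟨2, one_lt_two, fun i x _ => by simp [Subsingleton.elim x 0]⟩
  | succ m =>
    obtain ⟨c, hc, hcK⟩ := exists_pos_mul_rpow_norm_le_dualMixedVol hQ hq.le
    obtain ⟨M, hM1, hMC⟩ : ∃ M : ℝ, 1 < M ∧ C < c * M ^ (-q) :=
      ((eventually_gt_atTop 1).and <| ((tendsto_rpow_atTop (neg_pos.2 hq)).const_mul_atTop hc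
        |>.eventually_gt_atTop C)).exists
    refine ⟨M, hM1, fun i x hx => mem_closedBall_zero_iff.2 (not_lt.1 fun hxM => ?_)⟩
    have hx0 : x ≠ 0 := norm_pos_iff.1 (by linarith)
    have hlt : c * M ^ (-q) < c * ‖x‖ ^ (-q) := by gcongr; linarith
    linarith [hcK (K i) (hK i) x hx hx0, hC i]
end
end

section
/- Suppose a sequence of convex bodies K_i in ℝⁿ with origin in their interiors converges in the Hausdorff metric to a compact convex set K with the origin on its boundary, and μ is a nonzero finite Borel measure on S^{n−1} not concentrated in any closed hemisphere. Then there exist δ₀ ∈ (0,1) and u₀ ∈ S^{n−1} such that μ(ω_{δ₀}(u₀)) > 0 and the radial functions ρ_{K_i} converge to 0 uniformly on ω_{δ₀}(u₀), where ω_δ(u) = {v ∈ S^{n−1} : v·u > δ}. -/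
open MeasureTheory Metric Set Filter Pointwise
open scoped Classical

noncomputable section

/-!
Since `K₀` is closed, convex and has the origin on its boundary, it has a supporting unit vector
`u₀` there: `K₀ ⊆ {x | ⟪u₀, x⟫ ≤ 0}`. Every point of `K i` is within `d_H(K i, K₀)` of this
half-space, so `h_{K i}(u₀) ≤ d_H(K i, K₀) → 0`, and on the cap `⟪v, u₀⟫ > δ` we have
`ρ_{K i}(v) ≤ h_{K i}(u₀) / δ`. As `μ` is not concentrated in the closed hemisphere
`⟪v, -u₀⟫ ≥ 0`, the open hemisphere `⟪v, u₀⟫ > 0` has positive measure, and it is the countable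
union of the caps `⟪v, u₀⟫ > 1 / (k + 2)`, one of which must have positive measure.
-/

section InnerProductSpace

variable {E : Type*} [NormedAddCommGroup E] [InnerProductSpace ℝ E]

lemma exists_norm_eq_one_inner_lt_of_notMem [CompleteSpace E] {s : Set E} {x : E}
    (hs : Convex ℝ s) (hsc : IsClosed s) (hne : s.Nonempty) (hx : x ∉ s) :
    ∃ u : E, ‖u‖ = 1 ∧ ∀ b ∈ s, inner ℝ u b < inner ℝ u x := by
  obtain ⟨f, c, hfs, hfx⟩ := geometric_hahn_banach_closed_point hs hsc hx
  obtain ⟨v, rfl⟩ := (InnerProductSpace.toDual ℝ E).surjective f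
  simp only [InnerProductSpace.toDual_apply_apply] at hfs hfx
  obtain ⟨b₀, hb₀⟩ := hne
  have hv0 : v ≠ 0 := by
    rintro rfl
    simpa using (hfs b₀ hb₀).trans hfx
  refine ⟨‖v‖⁻¹ • v, norm_smul_inv_norm hv0, fun b hb => ?_⟩
  rw [real_inner_smul_left, real_inner_smul_left]
  exact mul_lt_mul_of_pos_left ((hfs b hb).trans hfx) (by positivity)

/-- Supporting hyperplane theorem: the unit normals separating points of `sᶜ` close to `x` from
`s` accumulate, by compactness of the unit sphere, at a supporting normal at `x`. -/
lemma exists_mem_sphere_inner_le_of_mem_frontier [FiniteDimensional ℝ E] {s : Set E} {x : E}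
    (hs : Convex ℝ s) (hsc : IsClosed s) (hx : x ∈ frontier s) :
    ∃ u ∈ sphere (0 : E) 1, ∀ b ∈ s, inner ℝ u b ≤ inner ℝ u x := by
  have hne : s.Nonempty := ⟨x, hsc.frontier_subset hx⟩
  have hxc : x ∈ closure sᶜ := frontier_subset_closure (frontier_compl s ▸ hx)
  obtain ⟨y, hys, hyx⟩ := mem_closure_iff_seq_limit.mp hxc
  choose u hu hsep using fun k => exists_norm_eq_one_inner_lt_of_notMem hs hsc hne (hys k)
  obtain ⟨u₀, hu₀, φ, hφ, huφ⟩ :=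
    (isCompact_sphere (0 : E) 1).tendsto_subseq (x := u) fun k => by simpa using hu k
  exact ⟨u₀, hu₀, fun b hb => le_of_tendsto_of_tendsto' (huφ.inner tendsto_const_nhds)
    (huφ.inner (hyx.comp hφ.tendsto_atTop)) fun k => (hsep (φ k) b hb).le⟩

lemma inner_le_infDist {s : Set E} {u : E} (hu : ‖u‖ = 1) (hne : s.Nonempty)
    (hsu : ∀ z ∈ s, inner ℝ u z ≤ 0) (x : E) : inner ℝ u x ≤ infDist x s := by
  refine (le_infDist hne).2 fun z hz => ?_
  calc inner ℝ u x = inner ℝ u z + inner ℝ u (x - z) := by rw [inner_sub_right]; ring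
    _ ≤ 0 + ‖u‖ * ‖x - z‖ := add_le_add (hsu z hz) (real_inner_le_norm _ _)
    _ = dist x z := by rw [hu, one_mul, zero_add, dist_eq_norm]

end InnerProductSpace

section Euclidean

variable {n : ℕ}

lemma supportFn_le_hausdorffDist {K L : Set (Euc n)} {u : Euc n} (hu : ‖u‖ = 1)
    (hK : Bornology.IsBounded K) (hKne : K.Nonempty) (hL : Bornology.IsBounded L)
    (hLne : L.Nonempty) (hLu : ∀ z ∈ L, inner ℝ u z ≤ 0) :
    supportFn K u ≤ hausdorffDist K L :=
  csSup_le (hKne.image _) <| forall_mem_image.2 fun x hx =>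
    (inner_le_infDist hu hLne hLu x).trans <| infDist_le_hausdorffDist_of_mem hx <|
      hausdorffEDist_ne_top_of_nonempty_of_bounded hKne hLne hK hL

lemma mul_inner_le_supportFn {K : Set (Euc n)} (hK : IsCompact K) {u v : Euc n} {r : ℝ}
    (hr : r • v ∈ K) : r * inner ℝ v u ≤ supportFn K u := by
  have hbdd : BddAbove ((fun x => inner ℝ u x) '' K) :=
    (hK.image (continuous_const.inner continuous_id)).bddAbove
  calc r * inner ℝ v u = inner ℝ u (r • v) := by rw [real_inner_smul_right, real_inner_comm]
    _ ≤ supportFn K u := le_csSup hbdd ⟨_, hr, rfl⟩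

lemma radialFn_mem_Icc {K : Set (Euc n)} (hK : IsCompact K) (h0 : 0 ∈ K) {u v : Euc n} {δ : ℝ}
    (hδ : 0 < δ) (hv : δ ≤ inner ℝ v u) : radialFn K v ∈ Icc 0 (supportFn K u / δ) := by
  have hbound : ∀ r ∈ {r : ℝ | 0 ≤ r ∧ r • v ∈ K}, r ≤ supportFn K u / δ := fun r hr =>
    (le_div_iff₀ hδ).2 ((mul_le_mul_of_nonneg_left hv hr.1).trans (mul_inner_le_supportFn hK hr.2))
  have hzero : (0 : ℝ) ∈ {r : ℝ | 0 ≤ r ∧ r • v ∈ K} := ⟨le_rfl, by rwa [zero_smul]⟩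
  exact ⟨le_csSup ⟨_, hbound⟩ hzero, csSup_le ⟨0, hzero⟩ hbound⟩

lemma tendstoUniformlyOn_radialFn_zero {ι : Type*} {l : Filter ι} {K : ι → Set (Euc n)}
    {L : Set (Euc n)} {u : Euc n} {δ : ℝ} (hK : ∀ i, IsCompact (K i)) (hK0 : ∀ i, 0 ∈ K i)
    (hL : IsCompact L) (hLne : L.Nonempty) (hu : ‖u‖ = 1) (hLu : ∀ z ∈ L, inner ℝ u z ≤ 0)
    (hδ : 0 < δ) (hKL : Tendsto (fun i => hausdorffDist (K i) L) l (nhds 0)) :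
    TendstoUniformlyOn (fun i => radialFn (K i)) 0 l {v | δ ≤ inner ℝ v u} := by
  rw [Metric.tendstoUniformlyOn_iff]
  intro ε hε
  filter_upwards [hKL.eventually (gt_mem_nhds (mul_pos hε hδ))] with i hi v hv
  obtain ⟨hρ0, hρ⟩ := radialFn_mem_Icc (hK i) (hK0 i) hδ hv
  have hsupportFn := supportFn_le_hausdorffDist hu (hK i).isBounded ⟨0, hK0 i⟩ hL.isBounded hLne hLu
  rw [Pi.zero_apply, dist_zero_left, Real.norm_of_nonneg hρ0]
  exact hρ.trans_lt ((div_lt_iff₀ hδ).2 (hsupportFn.trans_lt hi))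

end Euclidean

lemma exists_mem_Ioo_measure_pos {α : Type*} [MeasurableSpace α] {μ : Measure α} {s : Set α}
    {f : α → ℝ} (h : 0 < μ {x ∈ s | 0 < f x}) :
    ∃ δ ∈ Ioo (0 : ℝ) 1, 0 < μ {x ∈ s | δ < f x} := by
  have hcover : {x ∈ s | 0 < f x} ⊆ ⋃ k : ℕ, {x ∈ s | 1 / ((k : ℝ) + 2) < f x} := by
    rintro x ⟨hxs, hx⟩
    obtain ⟨k, hk⟩ := exists_nat_one_div_lt hx
    refine mem_iUnion.2 ⟨k, hxs, lt_of_le_of_lt ?_ hk⟩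
    gcongr
    linarith
  obtain ⟨k, hk⟩ := exists_measure_pos_of_not_measure_iUnion_null
    (pos_iff_ne_zero.1 (h.trans_le (measure_mono hcover)))
  refine ⟨1 / ((k : ℝ) + 2), ⟨by positivity, ?_⟩, hk⟩
  rw [div_lt_one (by positivity)]
  linarith [(k.cast_nonneg : (0 : ℝ) ≤ k)]

theorem radialFn_tendstoUniformlyOn_cap_general {n : ℕ}
    (K : ℕ → Set (Euc n)) (K₀ : Set (Euc n))
    (hKi : ∀ i, IsConvexBody (K i))
    (hcpt : IsCompact K₀) (hcvx : Convex ℝ K₀)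
    (h0 : (0 : Euc n) ∈ frontier K₀)
    (hconv : Tendsto (fun i => Metric.hausdorffDist (K i) K₀) atTop (nhds 0))
    (μ : Measure (Euc n))
    (hsupp : μ (sphere (0 : Euc n) 1)ᶜ = 0)
    (hconc : ¬ ∃ u ∈ sphere (0 : Euc n) 1,
        μ {v : Euc n | (0:ℝ) ≤ inner ℝ v u} = μ Set.univ) :
    ∃ δ ∈ Ioo (0:ℝ) 1, ∃ u₀ ∈ sphere (0 : Euc n) 1,
      0 < μ {v ∈ sphere (0 : Euc n) 1 | δ < (inner ℝ v u₀ : ℝ)} ∧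
      TendstoUniformlyOn (fun i => radialFn (K i)) 0 atTop
        {v ∈ sphere (0 : Euc n) 1 | δ < (inner ℝ v u₀ : ℝ)} := by
  obtain ⟨u₀, hu₀, hK₀u₀⟩ :=
    exists_mem_sphere_inner_le_of_mem_frontier hcvx hcpt.isClosed h0
  simp only [inner_zero_right] at hK₀u₀
  have hhemisphere : 0 < μ {v | 0 < inner ℝ v u₀} := by
    refine pos_iff_ne_zero.2 fun h => hconc ⟨-u₀, by simpa using hu₀, ?_⟩
    refine measure_of_measure_compl_eq_zero ?_
    simpa only [compl_ofPred, not_le, inner_neg_right, neg_neg_iff_pos] using h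
  rw [← measure_inter_conull hsupp, inter_comm] at hhemisphere
  obtain ⟨δ, hδ, hcap⟩ := exists_mem_Ioo_measure_pos hhemisphere
  refine ⟨δ, hδ, u₀, hu₀, hcap, ?_⟩
  have hK : ∀ i, IsCompact (K i) := fun i => (hKi i).1
  have hK0 : ∀ i, (0 : Euc n) ∈ K i := fun i => interior_subset (hKi i).2.2
  exact (tendstoUniformlyOn_radialFn_zero hK hK0 hcpt ⟨0, hcpt.isClosed.frontier_subset h0⟩
    (by simpa using hu₀) hK₀u₀ hδ.1 hconv).mono fun v hv => hv.2.le

/-- if K_i → K with o ∈ ∂K, then ρ_{K_i} → 0 uniformly on a spherical cap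
of positive measure for any measure not concentrated in a closed hemisphere. -/
theorem radialFn_tendstoUniformlyOn_cap {n : ℕ}
    (K : ℕ → Set (Euc n)) (K₀ : Set (Euc n))
    (hKi : ∀ i, IsConvexBody (K i))
    (hcpt : IsCompact K₀) (hcvx : Convex ℝ K₀)
    (h0 : (0 : Euc n) ∈ frontier K₀)
    (hconv : Tendsto (fun i => Metric.hausdorffDist (K i) K₀) atTop (nhds 0))
    (μ : Measure (Euc n)) [IsFiniteMeasure μ] (hμ0 : μ ≠ 0)
    (hsupp : μ (sphere (0 : Euc n) 1)ᶜ = 0)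
    (hconc : ¬ ∃ u ∈ sphere (0 : Euc n) 1,
        μ {v : Euc n | (0:ℝ) ≤ inner ℝ v u} = μ Set.univ) :
    ∃ δ ∈ Ioo (0:ℝ) 1, ∃ u₀ ∈ sphere (0 : Euc n) 1,
      0 < μ {v ∈ sphere (0 : Euc n) 1 | δ < (inner ℝ v u₀ : ℝ)} ∧
      TendstoUniformlyOn (fun i => radialFn (K i)) 0 atTop
        {v ∈ sphere (0 : Euc n) 1 | δ < (inner ℝ v u₀ : ℝ)} :=
  radialFn_tendstoUniformlyOn_cap_general K K₀ hKi hcpt hcvx h0 hconv μ hsupp hconc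
end
end
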